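/- Let N ≥ 1, g such that N = 2g, and e ≥ 2. Then rank_2(SL_N(ℤ/2^eℤ)) ≤ (N² - 1) + rank_2(SL_N(ℤ/4ℤ)), and rank_2(SL_N(ℤ/4ℤ)) ≤ (N² - 1) + rank_2(SL_N(ℤ/2ℤ)). -/

import Mathlib

/-- The `p`-rank of a group: the largest `r` such that `(ℤ/pℤ)^r` embeds as a subgroup. -/
noncomputable def pRank (p : ℕ) (G : Type*) [Group G] : ℕ :=
  sSup {r : ℕ | ∃ H : Subgroup G, Nonempty (H ≃* (Fin r → Multiplicative (ZMod p)))}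


/-! Auxiliary lemmas -/

section ElemAbelian

lemma elemAbelian_struct {H : Type*} [Group H] [Finite H]
    (hcomm : ∀ a b : H, a * b = b * a) (hexp : ∀ a : H, a * a = 1) :
    ∃ n : ℕ, Nonempty (H ≃* (Fin n → Multiplicative (ZMod 2))) ∧ Nat.card H = 2 ^ n := by
  haveI : Fact (Nat.Prime 2) := ⟨Nat.prime_two⟩
  letI : CommGroup H := { mul_comm := hcomm }
  have h2 : ∀ x : Additive H, (2 : ℕ) • x = 0 := by
    intro x
    rw [two_nsmul]
    exact congrArg Additive.ofMul (hexp x.toMul)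
  letI : Module (ZMod 2) (Additive H) := AddCommGroup.zmodModule h2
  haveI : Module.Finite (ZMod 2) (Additive H) := Module.Finite.of_finite
  let b := Module.finBasis (ZMod 2) (Additive H)
  set n := Module.finrank (ZMod 2) (Additive H)
  refine ⟨n, ⟨?_⟩, ?_⟩
  · exact (MulEquiv.multiplicativeAdditive H).symm.trans
      ((AddEquiv.toMultiplicative b.equivFun.toAddEquiv).trans
        (MulEquiv.funMultiplicative _ _))
  · have : Nat.card H = Nat.card (Fin n → ZMod 2) :=
      Nat.card_congr (Additive.ofMul.trans b.equivFun.toEquiv)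
    rw [this, Nat.card_fun]
    simp

end ElemAbelian



section GroupLemma

lemma pRankSet_zero_mem (G : Type*) [Group G] :
    0 ∈ {r : ℕ | ∃ H : Subgroup G, Nonempty (H ≃* (Fin r → Multiplicative (ZMod 2)))} :=
  ⟨⊥, ⟨MulEquiv.ofUnique⟩⟩

lemma pRankSet_bddAbove (G : Type*) [Group G] [Finite G] :
    BddAbove {r : ℕ | ∃ H : Subgroup G, Nonempty (H ≃* (Fin r → Multiplicative (ZMod 2)))} := by
  refine ⟨Nat.card G, fun r hr => ?_⟩
  obtain ⟨H, ⟨φ⟩⟩ := hr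
  have hcard : Nat.card H = 2 ^ r := by
    rw [Nat.card_congr φ.toEquiv, Nat.card_fun]; simp
  have h1 : Nat.card H ≤ Nat.card G :=
    Nat.card_le_card_of_injective _ H.subtype_injective
  have : r < Nat.card G := lt_of_lt_of_le (Nat.lt_two_pow_self) (hcard ▸ h1)
  exact this.le

lemma mulEquiv_sq_one {r : ℕ} (v : Fin r → Multiplicative (ZMod 2)) : v * v = 1 := by
  funext i
  show Multiplicative.ofAdd ((v i).toAdd + (v i).toAdd) = 1
  rw [CharTwo.add_self_eq_zero]
  rfl

lemma pRank_le_add {G Q : Type*} [Group G] [Group Q] [Finite G] [Finite Q]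
    (f : G →* Q) (k : ℕ)
    (hk : Nat.card {x : G // f x = 1 ∧ x * x = 1} ≤ 2 ^ k) :
    pRank 2 G ≤ k + pRank 2 Q := by
  have hrdef : pRank 2 G = sSup {r : ℕ | ∃ H : Subgroup G,
      Nonempty (H ≃* (Fin r → Multiplicative (ZMod 2)))} := rfl
  have hmem := Nat.sSup_mem ⟨0, pRankSet_zero_mem G⟩ (pRankSet_bddAbove G)
  rw [← hrdef] at hmem
  obtain ⟨H, ⟨φ⟩⟩ := hmem
  set r := pRank 2 G with hr
  have hexp : ∀ a : H, a * a = 1 := by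
    intro a
    apply φ.injective
    rw [map_mul, map_one, mulEquiv_sq_one]
  have hcomm : ∀ a b : H, a * b = b * a := by
    intro a b
    apply φ.injective
    rw [map_mul, map_mul]
    exact mul_comm _ _
  set f' := f.comp H.subtype with hf'
  have hker : Nat.card f'.ker ≤ 2 ^ k := by
    refine le_trans (Nat.card_le_card_of_injective
      (fun y : f'.ker => (⟨((y : H) : G), y.2, by
        have : (((y : H) : G)) * (((y : H) : G)) = (((((y : H)) * ((y : H))) : H) : G) := rfl
        rw [this, hexp (y : H)]; rfl⟩ : {x : G // f x = 1 ∧ x * x = 1})) ?_) hk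
    intro a b hab
    have h2 : ((a : H) : G) = ((b : H) : G) := by simpa using congrArg Subtype.val hab
    exact Subtype.ext (Subtype.ext h2)
  have hrexp : ∀ a : f'.range, a * a = 1 := by
    rintro ⟨a, y, rfl⟩
    ext
    show f' y * f' y = 1
    rw [← map_mul, hexp, map_one]
  have hrcomm : ∀ a b : f'.range, a * b = b * a := by
    rintro ⟨a, y, rfl⟩ ⟨b, z, rfl⟩
    ext
    show f' y * f' z = f' z * f' y
    rw [← map_mul, ← map_mul, hcomm]
  obtain ⟨m, ⟨ψ⟩, hm⟩ := elemAbelian_struct hrcomm hrexp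
  have hmle : m ≤ pRank 2 Q := le_csSup (pRankSet_bddAbove Q) ⟨f'.range, ⟨ψ⟩⟩
  have hHcard : Nat.card H = 2 ^ r := by
    rw [Nat.card_congr φ.toEquiv, Nat.card_fun]; simp
  have hsplit : Nat.card H = Nat.card (H ⧸ f'.ker) * Nat.card f'.ker :=
    Subgroup.card_eq_card_quotient_mul_card_subgroup _
  have hquot : Nat.card (H ⧸ f'.ker) = 2 ^ m := by
    rw [Nat.card_congr (QuotientGroup.quotientKerEquivRange f').toEquiv, hm]
  have hle : (2 : ℕ) ^ r ≤ 2 ^ (m + k) := by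
    rw [← hHcard, hsplit, hquot, pow_add]
    exact Nat.mul_le_mul le_rfl hker
  have := (Nat.pow_le_pow_iff_right (by norm_num)).mp hle
  omega

end GroupLemma

section ZModDvd
variable {n e : ℕ}

lemma dvd_of_dvd_val [NeZero n] (j : ℕ) (x : ZMod n) (h : 2 ^ j ∣ x.val) :
    ((2 ^ j : ℕ) : ZMod n) ∣ x := by
  obtain ⟨q, hq⟩ := h
  have hx : ((x.val : ℕ) : ZMod n) = x := ZMod.natCast_rightInverse x
  rw [← hx, hq, Nat.cast_mul]
  exact dvd_mul_right _ _

lemma dvd_val_of_dvd [NeZero n] (hn : n = 2 ^ e) (j : ℕ) (hj : j ≤ e) (x : ZMod n)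
    (h : ((2 ^ j : ℕ) : ZMod n) ∣ x) : 2 ^ j ∣ x.val := by
  have hjn : 2 ^ j ∣ n := hn ▸ pow_dvd_pow 2 hj
  obtain ⟨y, rfl⟩ := h
  rw [ZMod.val_mul, ZMod.val_natCast]
  exact (Nat.dvd_mod_iff hjn).mpr (Dvd.dvd.mul_right ((Nat.dvd_mod_iff hjn).mpr dvd_rfl) _)

lemma halve [NeZero n] (hn : n = 2 ^ e) (j : ℕ) (hj1 : 1 ≤ j) (hje : j ≤ e) (x : ZMod n)
    (h : ((2 ^ j : ℕ) : ZMod n) ∣ (2 : ZMod n) * x) : ((2 ^ (j - 1) : ℕ) : ZMod n) ∣ x := by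
  have hv : 2 ^ j ∣ ((2 : ZMod n) * x).val := dvd_val_of_dvd hn j hje _ h
  have h2x : (2 : ZMod n) * x = ((2 * x.val : ℕ) : ZMod n) := by
    push_cast [ZMod.natCast_rightInverse x]
    ring
  rw [h2x, ZMod.val_natCast] at hv
  have hjn : 2 ^ j ∣ n := hn ▸ pow_dvd_pow 2 hje
  have hv2 : 2 ^ j ∣ 2 * x.val := (Nat.dvd_mod_iff hjn).mp hv
  obtain ⟨c, hc⟩ := hv2
  have hj' : 2 ^ j = 2 * 2 ^ (j - 1) := by
    rw [← pow_succ']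
    congr 1
    omega
  have hx : x.val = 2 ^ (j - 1) * c := by
    rw [hj', mul_assoc] at hc
    omega
  exact dvd_of_dvd_val _ _ ⟨c, hx⟩

lemma boot [NeZero n] (hn : n = 2 ^ e) (he : 2 ≤ e) {N : ℕ}
    (D : Matrix (Fin N) (Fin N) (ZMod n))
    (h4 : ∀ i j, ((2 ^ 2 : ℕ) : ZMod n) ∣ D i j)
    (hsq : ∀ i j, (2 : ZMod n) * D i j = -((D * D) i j)) :
    ∀ i j, ((2 ^ (e - 1) : ℕ) : ZMod n) ∣ D i j := by
  suffices h : ∀ t, ∀ i j, ((2 ^ (min (2 + t) (e - 1)) : ℕ) : ZMod n) ∣ D i j by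
    intro i j
    have := h e i j
    rwa [show min (2 + e) (e - 1) = e - 1 by omega] at this
  intro t
  induction t with
  | zero =>
    intro i j
    exact dvd_trans (Nat.cast_dvd_cast (pow_dvd_pow 2 (by omega))) (h4 i j)
  | succ t ih =>
    intro i j
    set m := min (2 + t) (e - 1) with hm
    have hm1 : 1 ≤ m := by omega
    have hDD : ((2 ^ (min (2 * m) e) : ℕ) : ZMod n) ∣ (D * D) i j := by
      rw [Matrix.mul_apply]
      apply Finset.dvd_sum
      intro k _
      refine dvd_trans (Nat.cast_dvd_cast (pow_dvd_pow 2 (min_le_left _ _))) ?_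
      rw [two_mul, pow_add, Nat.cast_mul]
      exact mul_dvd_mul (ih i k) (ih k j)
    have h2x : ((2 ^ (min (2 * m) e) : ℕ) : ZMod n) ∣ (2 : ZMod n) * D i j := by
      rw [hsq]
      exact hDD.neg_right
    have hstep := halve hn (min (2 * m) e) (by omega) (min_le_right _ _) _ h2x
    exact dvd_trans (Nat.cast_dvd_cast (pow_dvd_pow 2 (by omega))) hstep

end ZModDvd

section Counting

lemma card_traceZero (N : ℕ) (hN : 1 ≤ N) :
    Nat.card {B : Matrix (Fin N) (Fin N) (ZMod 2) // Matrix.trace B = 0} = 2 ^ (N ^ 2 - 1) := by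
  classical
  set φ := Matrix.traceAddMonoidHom (Fin N) (ZMod 2) with hφ
  have hsurj : Function.Surjective φ := by
    intro c
    refine ⟨Matrix.diagonal (fun i => if i = (⟨0, hN⟩ : Fin N) then c else 0), ?_⟩
    have h0 : Matrix.trace (Matrix.diagonal
        (fun i => if i = (⟨0, hN⟩ : Fin N) then c else 0)) = c := by
      rw [Matrix.trace_diagonal]
      simp
    exact h0
  have hcard : Nat.card (Matrix (Fin N) (Fin N) (ZMod 2)) = 2 ^ (N ^ 2) := by
    have : Nat.card (Matrix (Fin N) (Fin N) (ZMod 2)) = Nat.card (Fin N → Fin N → ZMod 2) :=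
      Nat.card_congr (Equiv.refl _)
    rw [this, Nat.card_fun, Nat.card_fun]
    simp [← pow_mul, sq]
  have hsplit : Nat.card (Matrix (Fin N) (Fin N) (ZMod 2))
      = Nat.card (Matrix (Fin N) (Fin N) (ZMod 2) ⧸ φ.ker) * Nat.card φ.ker :=
    AddSubgroup.card_eq_card_quotient_mul_card_addSubgroup _
  have hquot : Nat.card (Matrix (Fin N) (Fin N) (ZMod 2) ⧸ φ.ker) = 2 := by
    rw [Nat.card_congr (QuotientAddGroup.quotientKerEquivOfSurjective φ hsurj).toEquiv]
    simp [Nat.card_eq_fintype_card]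
  have hset : Nat.card {B : Matrix (Fin N) (Fin N) (ZMod 2) // Matrix.trace B = 0}
      = Nat.card φ.ker := by
    refine Nat.card_congr (Equiv.subtypeEquivRight ?_)
    intro B
    simp [AddMonoidHom.mem_ker, hφ, Matrix.traceAddMonoidHom]
  rw [hset]
  have h1 : (2:ℕ) ^ (N ^ 2) = 2 * 2 ^ (N ^ 2 - 1) := by
    rw [← pow_succ']
    congr 1
    have : 1 ≤ N ^ 2 := Nat.one_le_pow _ _ (by omega)
    omega
  rw [hsplit, hquot, h1] at hcard
  exact (Nat.eq_of_mul_eq_mul_left (by norm_num : 0 < 2) hcard)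

open Matrix in
lemma card_sl_le {n e N : ℕ} [NeZero n] (hn : n = 2 ^ e) (he : 2 ≤ e) (hN : 1 ≤ N)
    (P : Matrix.SpecialLinearGroup (Fin N) (ZMod n) → Prop)
    (hP : ∀ x : Matrix.SpecialLinearGroup (Fin N) (ZMod n), P x → ∀ i j,
      ((2 ^ (e - 1) : ℕ) : ZMod n) ∣ (((x : Matrix (Fin N) (Fin N) (ZMod n)) - 1) i j)) :
    Nat.card {x : Matrix.SpecialLinearGroup (Fin N) (ZMod n) // P x} ≤ 2 ^ (N ^ 2 - 1) := by
  classical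
  set r : ZMod n := ((2 ^ (e - 1) : ℕ) : ZMod n) with hrdef
  set q : Matrix.SpecialLinearGroup (Fin N) (ZMod n) → Fin N → Fin N → ℕ :=
    fun x i j => ((((x : Matrix (Fin N) (Fin N) (ZMod n)) - 1) i j).val) / 2 ^ (e - 1) with hq
  have hne : (0:ℕ) < 2 ^ (e-1) := Nat.pow_pos (by norm_num)
  have hqlt : ∀ x i j, q x i j < 2 := by
    intro x i j
    have hv : (((x : Matrix (Fin N) (Fin N) (ZMod n)) - 1) i j).val < n := ZMod.val_lt _
    have : n = 2 ^ (e - 1) * 2 := by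
      rw [hn, ← pow_succ]
      congr 1
      omega
    rw [hq]
    exact Nat.div_lt_of_lt_mul (by omega)
  have hval : ∀ x : Matrix.SpecialLinearGroup (Fin N) (ZMod n), P x → ∀ i j,
      (((x : Matrix (Fin N) (Fin N) (ZMod n)) - 1) i j).val = 2 ^ (e - 1) * q x i j := by
    intro x hx i j
    have := dvd_val_of_dvd hn (e - 1) (by omega) _ (hP x hx i j)
    exact (Nat.mul_div_cancel' this).symm
  have htr : ∀ x : Matrix.SpecialLinearGroup (Fin N) (ZMod n), P x →
      2 ∣ ∑ i, q x i i := by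
    intro x hx
    set C : Matrix (Fin N) (Fin N) (ZMod n) := fun i j => ((q x i j : ℕ) : ZMod n) with hC
    have hentry : ∀ i j, ((x : Matrix (Fin N) (Fin N) (ZMod n)) - 1) i j = r * C i j := by
      intro i j
      have h1 : ((((((x : Matrix (Fin N) (Fin N) (ZMod n)) - 1) i j).val : ℕ)) : ZMod n)
          = ((x : Matrix (Fin N) (Fin N) (ZMod n)) - 1) i j := ZMod.natCast_rightInverse _
      rw [← h1, hval x hx i j, Nat.cast_mul]
    have hxeq : (x : Matrix (Fin N) (Fin N) (ZMod n)) = 1 + r • C := by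
      ext i j
      have := hentry i j
      rw [Matrix.sub_apply] at this
      rw [Matrix.add_apply, Matrix.smul_apply, smul_eq_mul]
      linear_combination this
    have hdet : det ((x : Matrix (Fin N) (Fin N) (ZMod n))) = 1 := x.prop
    rw [hxeq, Matrix.det_one_add_smul r C] at hdet
    have hr2 : r ^ 2 = 0 := by
      rw [hrdef, ← Nat.cast_pow, ZMod.natCast_eq_zero_iff, hn, ← pow_mul]
      exact pow_dvd_pow 2 (by omega)
    rw [hr2] at hdet
    have htr0 : Matrix.trace C * r = 0 := by linear_combination hdet
    have hCtr : Matrix.trace C = ((∑ i, q x i i : ℕ) : ZMod n) := by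
      rw [Matrix.trace, Nat.cast_sum]
      rfl
    rw [hCtr, hrdef, ← Nat.cast_mul, ZMod.natCast_eq_zero_iff, hn] at htr0
    set S := ∑ i, q x i i
    have h2e : (2:ℕ) ^ e = 2 ^ (e - 1) * 2 := by
      rw [← pow_succ]
      congr 1
      omega
    obtain ⟨c, hc⟩ := htr0
    rw [h2e] at hc
    have hS : S = 2 * c := by
      have h' : 2 ^ (e-1) * (2 * c) = 2 ^ (e-1) * S := by ring_nf; ring_nf at hc; omega
      have := Nat.eq_of_mul_eq_mul_left hne h'
      omega
    exact ⟨c, hS⟩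
  set F : {x : Matrix.SpecialLinearGroup (Fin N) (ZMod n) // P x} →
      {B : Matrix (Fin N) (Fin N) (ZMod 2) // Matrix.trace B = 0} :=
    fun x => ⟨fun i j => ((q x.1 i j : ℕ) : ZMod 2), by
      have : Matrix.trace (fun i j => ((q x.1 i j : ℕ) : ZMod 2) : Matrix (Fin N) (Fin N) (ZMod 2))
          = ((∑ i, q x.1 i i : ℕ) : ZMod 2) := by
        unfold Matrix.trace
        rw [Nat.cast_sum]
        rfl
      rw [this, ZMod.natCast_eq_zero_iff]
      exact htr x.1 x.2⟩ with hF
  have hinj : Function.Injective F := by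
    intro x y hxy
    have hq' : ∀ i j, q x.1 i j = q y.1 i j := by
      intro i j
      have := congrArg (fun B => (B.1 i j).val) hxy
      simpa [hF, ZMod.val_cast_of_lt (hqlt x.1 i j), ZMod.val_cast_of_lt (hqlt y.1 i j)] using this
    have hmat : (x.1 : Matrix (Fin N) (Fin N) (ZMod n))
        = (y.1 : Matrix (Fin N) (Fin N) (ZMod n)) := by
      ext i j
      have hvx := hval x.1 x.2 i j
      have hvy := hval y.1 y.2 i j
      have h3 : (((x.1 : Matrix (Fin N) (Fin N) (ZMod n)) - 1) i j)
          = (((y.1 : Matrix (Fin N) (Fin N) (ZMod n)) - 1) i j) := by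
        apply ZMod.val_injective
        rw [hvx, hvy, hq' i j]
      rw [Matrix.sub_apply, Matrix.sub_apply] at h3
      linear_combination h3
    exact Subtype.ext (Subtype.ext hmat)
  calc Nat.card {x : Matrix.SpecialLinearGroup (Fin N) (ZMod n) // P x}
      ≤ Nat.card {B : Matrix (Fin N) (Fin N) (ZMod 2) // Matrix.trace B = 0} :=
        Nat.card_le_card_of_injective F hinj
    _ = 2 ^ (N ^ 2 - 1) := card_traceZero N hN

/-- Entry divisibility from the reduction map being trivial. -/
lemma red_dvd {n m N : ℕ} [NeZero n] [NeZero m] (hmn : m ∣ n)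
    (x : Matrix.SpecialLinearGroup (Fin N) (ZMod n))
    (hx : Matrix.SpecialLinearGroup.map (ZMod.castHom hmn (ZMod m)) x = 1) :
    ∀ i j, m ∣ ((((x : Matrix (Fin N) (Fin N) (ZMod n)) - 1)) i j).val := by
  classical
  intro i j
  have hmat : (ZMod.castHom hmn (ZMod m)).mapMatrix (x : Matrix (Fin N) (Fin N) (ZMod n))
      = (1 : Matrix (Fin N) (Fin N) (ZMod m)) := by
    have := congrArg Subtype.val hx
    simpa [Matrix.SpecialLinearGroup.map_apply_coe, RingHom.mapMatrix_apply] using this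
  have hij : ZMod.castHom hmn (ZMod m) ((x : Matrix (Fin N) (Fin N) (ZMod n)) i j)
      = (1 : Matrix (Fin N) (Fin N) (ZMod m)) i j := by
    have := congrFun (congrFun hmat i) j
    simpa [RingHom.mapMatrix_apply, Matrix.map_apply] using this
  have hD : ZMod.castHom hmn (ZMod m) ((((x : Matrix (Fin N) (Fin N) (ZMod n)) - 1)) i j) = 0 := by
    rw [Matrix.sub_apply, map_sub, hij]
    rcases eq_or_ne i j with h | h
    · subst h
      simp [Matrix.one_apply_eq, ZMod.cast_one hmn]
    · simp [Matrix.one_apply_ne h]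
  set D := (((x : Matrix (Fin N) (Fin N) (ZMod n)) - 1)) i j
  have hcast : ((D.val : ℕ) : ZMod m) = 0 := by
    rw [ZMod.natCast_val]
    rw [ZMod.castHom_apply] at hD
    exact hD
  exact (ZMod.natCast_eq_zero_iff _ _).mp hcast

end Counting



/-- Let `N = 2g ≥ 1` and `e ≥ 2`. Then
`rank_2(SL_N(ℤ/2^eℤ)) ≤ (N² - 1) + rank_2(SL_N(ℤ/4ℤ))` and
`rank_2(SL_N(ℤ/4ℤ)) ≤ (N² - 1) + rank_2(SL_N(ℤ/2ℤ))`. -/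
theorem stmt_14 (N g e : ℕ) (hN : 1 ≤ N) (hg : N = 2 * g) (he : 2 ≤ e) :
    pRank 2 (Matrix.SpecialLinearGroup (Fin N) (ZMod (2 ^ e)))
      ≤ (N ^ 2 - 1) + pRank 2 (Matrix.SpecialLinearGroup (Fin N) (ZMod 4)) ∧
    pRank 2 (Matrix.SpecialLinearGroup (Fin N) (ZMod 4))
      ≤ (N ^ 2 - 1) + pRank 2 (Matrix.SpecialLinearGroup (Fin N) (ZMod 2)) := by
  haveI h2e : NeZero (2 ^ e) := ⟨pow_ne_zero e two_ne_zero⟩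
  constructor
  · have hdvd4 : (4:ℕ) ∣ 2 ^ e := by
      have h44 : (4:ℕ) = 2 ^ 2 := by norm_num
      rw [h44]
      exact pow_dvd_pow 2 he
    refine pRank_le_add
      (Matrix.SpecialLinearGroup.map (n := Fin N) (ZMod.castHom hdvd4 (ZMod 4))) (N ^ 2 - 1) ?_
    refine card_sl_le rfl he hN _ ?_
    intro x hx
    have h4 : ∀ i j, ((2^2:ℕ) : ZMod (2^e)) ∣
        ((x : Matrix (Fin N) (Fin N) (ZMod (2^e))) - 1) i j := by
      intro i j
      apply dvd_of_dvd_val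
      have := red_dvd hdvd4 x hx.1 i j
      simpa using this
    have hxx : (x : Matrix (Fin N) (Fin N) (ZMod (2^e)))
        * (x : Matrix (Fin N) (Fin N) (ZMod (2^e))) = 1 := by
      have := congrArg Subtype.val hx.2
      simpa using this
    set D := (x : Matrix (Fin N) (Fin N) (ZMod (2^e))) - 1 with hD
    have h0 : D * D + D + D = (x : Matrix (Fin N) (Fin N) (ZMod (2^e)))
        * (x : Matrix (Fin N) (Fin N) (ZMod (2^e))) - 1 := by
      rw [hD]
      noncomm_ring
    rw [hxx, sub_self] at h0
    have hsq : ∀ i j, (2 : ZMod (2^e)) * D i j = -((D * D) i j) := by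
      intro i j
      have h1 : (D * D) i j + D i j + D i j = 0 := by
        have := congrFun (congrFun h0 i) j
        simpa [Matrix.add_apply] using this
      linear_combination h1
    exact boot rfl he D h4 hsq
  · have hdvd2 : (2:ℕ) ∣ 4 := by norm_num
    refine pRank_le_add
      (Matrix.SpecialLinearGroup.map (n := Fin N) (ZMod.castHom hdvd2 (ZMod 2))) (N ^ 2 - 1) ?_
    refine card_sl_le (by norm_num : (4:ℕ) = 2 ^ 2) (le_refl 2) hN _ ?_
    intro x hx i j
    apply dvd_of_dvd_val
    have := red_dvd hdvd2 x hx.1 i j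
    simpa using this
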